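/- The gradient of the negative log-likelihood of the linear context logit, viewed as a function of the parameters (θ, A) ∈ ℝ^d × ℝ^{d×d}, is Lipschitz continuous: for every finite choice dataset D there exists a constant L ≥ 0 (depending on the dataset) such that the gradient of −ℓ(θ, A; D) = ∑_{(i,C)∈D} [ −(θ + A x_C)^T x_i + log ∑_{j∈C} exp((θ + A x_C)^T x_j) ] is L-Lipschitz on all of ℝ^d × ℝ^{d×d}. -/

import Mathlib

open Finset

/-- The mean feature vector of a choice set `C`. -/
noncomputable def meanFeat {ι : Type*} {d : ℕ} (x : ι → Fin d → ℝ) (C : Finset ι) :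
    Fin d → ℝ :=
  (C.card : ℝ)⁻¹ • ∑ j ∈ C, x j

/-!
Each term of the negative log-likelihood is a linear form in `(θ, A)` plus a log-sum-exp of
linear forms `ℓ_j`. The gradient of `z ↦ log ∑_{j ∈ C} exp (ℓ_j z)` is `∑_j p_j(z) ℓ_j`, where
`p` is the softmax of the `ℓ_j z`, and `∇p_j = p_j (ℓ_j - ∑_k p_k ℓ_k)`. Since `0 ≤ p ≤ 1`,
this derivative is bounded by `‖ℓ_j‖ + ∑_k ‖ℓ_k‖`, so by the mean value inequality every `p_j`,
and hence the gradient, is Lipschitz.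
-/

open Real

lemma LipschitzWith.finset_sum {α ι F : Type*} [PseudoEMetricSpace α] [NormedAddCommGroup F]
    (s : Finset ι) {f : ι → α → F} {K : ι → NNReal} (h : ∀ i ∈ s, LipschitzWith (K i) (f i)) :
    LipschitzWith (∑ i ∈ s, K i) fun z => ∑ i ∈ s, f i z := by
  classical
  induction s using Finset.induction_on with
  | empty => simp only [Finset.sum_empty]; exact LipschitzWith.const 0
  | insert a s ha ih =>
    simp only [Finset.sum_insert ha]
    exact (h a (mem_insert_self a s)).add (ih fun i hi => h i (mem_insert_of_mem hi))

lemma LipschitzWith.smul_const {α F : Type*} [PseudoMetricSpace α] [NormedAddCommGroup F]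
    [NormedSpace ℝ F] {f : α → ℝ} {K : NNReal} (hf : LipschitzWith K f) (c : F) :
    LipschitzWith (K * ‖c‖₊) fun z => f z • c := by
  refine LipschitzWith.of_dist_le_mul fun a b => ?_
  rw [dist_eq_norm, ← sub_smul, norm_smul, ← dist_eq_norm, NNReal.coe_mul, coe_nnnorm,
    mul_right_comm]
  exact mul_le_mul_of_nonneg_right (hf.dist_le_mul a b) (norm_nonneg c)

section LipschitzFDeriv

variable {E F : Type*} [NormedAddCommGroup E] [NormedSpace ℝ E] [NormedAddCommGroup F]
  [NormedSpace ℝ F]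

def LipschitzFDeriv (f : E → F) : Prop :=
  Differentiable ℝ f ∧ ∃ K, LipschitzWith K (fderiv ℝ f)

lemma lipschitzFDeriv_const (c : F) : LipschitzFDeriv fun _ : E => c :=
  ⟨differentiable_const c, 0, by rw [fderiv_fun_const]; exact LipschitzWith.const' 0⟩

lemma ContinuousLinearMap.lipschitzFDeriv (ℓ : E →L[ℝ] F) : LipschitzFDeriv ℓ :=
  ⟨ℓ.differentiable, 0, (funext fun _ => ℓ.fderiv : fderiv ℝ ℓ = fun _ => ℓ) ▸ .const' ℓ⟩

lemma LipschitzFDeriv.add {f g : E → F} (hf : LipschitzFDeriv f) (hg : LipschitzFDeriv g) :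
    LipschitzFDeriv fun z => f z + g z := by
  obtain ⟨hf, Kf, hKf⟩ := hf
  obtain ⟨hg, Kg, hKg⟩ := hg
  refine ⟨hf.fun_add hg, Kf + Kg, ?_⟩
  have hfg : fderiv ℝ (fun z => f z + g z) = fun z => fderiv ℝ f z + fderiv ℝ g z :=
    funext fun z => fderiv_fun_add (hf z) (hg z)
  exact hfg ▸ hKf.add hKg

lemma LipschitzFDeriv.finset_sum {ι : Type*} (s : Finset ι) {f : ι → E → F}
    (h : ∀ i ∈ s, LipschitzFDeriv (f i)) : LipschitzFDeriv fun z => ∑ i ∈ s, f i z := by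
  classical
  induction s using Finset.induction_on with
  | empty => simpa only [Finset.sum_empty] using lipschitzFDeriv_const 0
  | insert a s ha ih =>
    simp only [Finset.sum_insert ha]
    exact (h a (mem_insert_self a s)).add (ih fun i hi => h i (mem_insert_of_mem hi))

end LipschitzFDeriv

section Softmax

variable {κ E : Type*}

noncomputable def softmax (C : Finset κ) (u : κ → ℝ) (j : κ) : ℝ :=
  exp (u j) / ∑ k ∈ C, exp (u k)

lemma softmax_nonneg (C : Finset κ) (u : κ → ℝ) (j : κ) : 0 ≤ softmax C u j :=
  div_nonneg (exp_pos _).le (sum_nonneg fun _ _ => (exp_pos _).le)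

lemma softmax_le_one {C : Finset κ} (u : κ → ℝ) {j : κ} (hj : j ∈ C) : softmax C u j ≤ 1 :=
  div_le_one_of_le₀ (single_le_sum (f := fun k => exp (u k)) (fun _ _ => (exp_pos _).le) hj)
    (sum_nonneg fun _ _ => (exp_pos _).le)

lemma sum_softmax_smul {M : Type*} [AddCommGroup M] [Module ℝ M] (C : Finset κ) (u : κ → ℝ)
    (v : κ → M) :
    ∑ k ∈ C, softmax C u k • v k = (∑ k ∈ C, exp (u k))⁻¹ • ∑ k ∈ C, exp (u k) • v k := by
  simp only [softmax, smul_sum, smul_smul, div_eq_inv_mul]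

variable [NormedAddCommGroup E] [NormedSpace ℝ E] {C : Finset κ} (ℓ : κ → E →L[ℝ] ℝ)

lemma hasFDerivAt_sum_exp (z : E) :
    HasFDerivAt (fun z => ∑ k ∈ C, exp (ℓ k z)) (∑ k ∈ C, exp (ℓ k z) • ℓ k) z :=
  HasFDerivAt.fun_sum fun k _ => (ℓ k).hasFDerivAt.exp

lemma sum_exp_pos (hC : C.Nonempty) (z : E) : 0 < ∑ k ∈ C, exp (ℓ k z) :=
  sum_pos (fun _ _ => exp_pos _) hC

lemma hasFDerivAt_softmax (hC : C.Nonempty) (j : κ) (z : E) :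
    HasFDerivAt (fun z => softmax C (fun k => ℓ k z) j)
      (softmax C (fun k => ℓ k z) j •
        (ℓ j - ∑ k ∈ C, softmax C (fun k => ℓ k z) k • ℓ k)) z := by
  have hinv := (hasDerivAt_inv (sum_exp_pos ℓ hC z).ne').comp_hasFDerivAt z
    (hasFDerivAt_sum_exp ℓ z)
  rw [sum_softmax_smul C (fun k => ℓ k z) ℓ]
  simp only [softmax, div_eq_mul_inv]
  refine ((ℓ j).hasFDerivAt.exp.fun_mul hinv).congr_fderiv ?_
  simp only [Function.comp_apply]
  module

lemma lipschitzWith_softmax (hC : C.Nonempty) {j : κ} (hj : j ∈ C) :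
    LipschitzWith (‖ℓ j‖₊ + ∑ k ∈ C, ‖ℓ k‖₊) fun z => softmax C (fun k => ℓ k z) j := by
  refine lipschitzWith_of_nnnorm_fderiv_le
    (fun z => (hasFDerivAt_softmax ℓ hC j z).differentiableAt) fun z => ?_
  rw [(hasFDerivAt_softmax ℓ hC j z).fderiv, ← NNReal.coe_le_coe]
  push_cast [coe_nnnorm]
  set p := softmax C fun k => ℓ k z
  have hmean : ‖∑ k ∈ C, p k • ℓ k‖ ≤ ∑ k ∈ C, ‖ℓ k‖ :=
    (norm_sum_le _ _).trans <| sum_le_sum fun k hk => by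
      rw [norm_smul, Real.norm_of_nonneg (softmax_nonneg _ _ k)]
      exact mul_le_of_le_one_left (norm_nonneg _) (softmax_le_one _ hk)
  calc ‖p j • (ℓ j - ∑ k ∈ C, p k • ℓ k)‖
      ≤ ‖ℓ j - ∑ k ∈ C, p k • ℓ k‖ := by
        rw [norm_smul, Real.norm_of_nonneg (softmax_nonneg _ _ j)]
        exact mul_le_of_le_one_left (norm_nonneg _) (softmax_le_one _ hj)
    _ ≤ ‖ℓ j‖ + ∑ k ∈ C, ‖ℓ k‖ := (norm_sub_le _ _).trans (add_le_add_right hmean _)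

lemma hasFDerivAt_logSumExp (hC : C.Nonempty) (z : E) :
    HasFDerivAt (fun z => log (∑ j ∈ C, exp (ℓ j z)))
      (∑ j ∈ C, softmax C (fun k => ℓ k z) j • ℓ j) z := by
  rw [sum_softmax_smul C (fun k => ℓ k z) ℓ]
  exact (hasFDerivAt_sum_exp ℓ z).log (sum_exp_pos ℓ hC z).ne'

lemma lipschitzFDeriv_logSumExp (C : Finset κ) :
    LipschitzFDeriv fun z : E => log (∑ j ∈ C, exp (ℓ j z)) := by
  rcases C.eq_empty_or_nonempty with rfl | hC
  · simpa only [sum_empty] using lipschitzFDeriv_const (log 0)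
  have hgrad : fderiv ℝ (fun z : E => log (∑ j ∈ C, exp (ℓ j z))) =
      fun z => ∑ j ∈ C, softmax C (fun k => ℓ k z) j • ℓ j :=
    funext fun z => (hasFDerivAt_logSumExp ℓ hC z).fderiv
  refine ⟨fun z => (hasFDerivAt_logSumExp ℓ hC z).differentiableAt, ?_⟩
  rw [hgrad]
  exact ⟨_, LipschitzWith.finset_sum C fun j hj =>
    (lipschitzWith_softmax ℓ hC hj).smul_const (ℓ j)⟩

end Softmax

/-- The utility `(θ + A c)ᵀ v` as a continuous linear form in `(θ, A)`. -/
noncomputable def contextUtility {d : ℕ} (c v : Fin d → ℝ) :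
    ((Fin d → ℝ) × (Fin d → Fin d → ℝ)) →L[ℝ] ℝ :=
  LinearMap.toContinuousLinearMap
    { toFun := fun θA => ∑ q : Fin d, (θA.1 q + ∑ s : Fin d, θA.2 q s * c s) * v q
      map_add' := fun a b => by
        simp only [Prod.fst_add, Prod.snd_add, Pi.add_apply, add_mul, sum_add_distrib]
        ring
      map_smul' := fun r a => by
        simp only [Prod.smul_fst, Prod.smul_snd, Pi.smul_apply, smul_eq_mul, RingHom.id_apply,
          mul_sum]
        refine sum_congr rfl fun q _ => ?_
        simp only [mul_assoc, ← mul_sum]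
        ring }

theorem statement12_general {ι : Type*} {d : ℕ} (x : ι → Fin d → ℝ)
    (D : Finset (ι × Finset ι)) :
    ∃ L : NNReal, LipschitzWith L
      (fderiv ℝ (fun θA : (Fin d → ℝ) × (Fin d → Fin d → ℝ) =>
        ∑ p ∈ D,
          (-(∑ q : Fin d, (θA.1 q + ∑ s : Fin d, θA.2 q s * meanFeat x p.2 s) * x p.1 q) +
            Real.log (∑ j ∈ p.2,
              Real.exp (∑ q : Fin d,
                (θA.1 q + ∑ s : Fin d, θA.2 q s * meanFeat x p.2 s) * x j q))))) :=
  (LipschitzFDeriv.finset_sum D fun p _ =>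
    (-contextUtility (meanFeat x p.2) (x p.1)).lipschitzFDeriv.add
      (lipschitzFDeriv_logSumExp (fun j => contextUtility (meanFeat x p.2) (x j)) p.2)).2

/-- The gradient of the negative log-likelihood of the linear context
logit, as a function of the parameters `(θ, A) ∈ ℝ^d × ℝ^{d×d}` (with the matrix `A`
represented as `Fin d → Fin d → ℝ` and `(θ + A x_C)ᵀ x_i` written out coordinatewise),
is Lipschitz continuous on all of `ℝ^d × ℝ^{d×d}` with some constant `L` depending on
the dataset. -/
theorem statement12 {ι : Type*} {d : ℕ} (x : ι → Fin d → ℝ)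
    (D : Finset (ι × Finset ι)) (hD : ∀ p ∈ D, p.1 ∈ p.2 ∧ p.2.Nonempty) :
    ∃ L : NNReal, LipschitzWith L
      (fderiv ℝ (fun θA : (Fin d → ℝ) × (Fin d → Fin d → ℝ) =>
        ∑ p ∈ D,
          (-(∑ q : Fin d, (θA.1 q + ∑ s : Fin d, θA.2 q s * meanFeat x p.2 s) * x p.1 q) +
            Real.log (∑ j ∈ p.2,
              Real.exp (∑ q : Fin d,
                (θA.1 q + ∑ s : Fin d, θA.2 q s * meanFeat x p.2 s) * x j q))))) :=
  statement12_general x D
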